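/- arXiv:2006.08243 — 9 statements merged into one kernel-verified Lean document; each statement's English description precedes it below -/
import Mathlib

section
/- Fix reals α > 0, u > 0, t, β₀ and positive integers I, L, and set ζ := I·L·α. Let τ_{il} ∈ [0,1] be given for each consumer i ∈ {1,…,I·L} and each subregion l ∈ {1,…,L}, let τ_l := (1/(I·L))·Σ_{i=1}^{I·L} τ_{il}, and let w̄_1,…,w̄_L ∈ ℝ. Define b₁ := (t − β₀ + α·Σ_{l=1}^L w̄_l)/(ζ + u), b_{2i}^l := α·τ_{il}/(ζ·τ_l + u), and b̄_2^l := (1/(I·L))·Σ_{i=1}^{I·L} b_{2i}^l. Then b̄_2^l = α·τ_l/(ζ·τ_l + u) for every l, and for every consumer i and every prediction vector (w_1^pre,…,w_L^pre) ∈ ℝ^L the first-order optimality condition holds: t − u·(b₁ + Σ_{l=1}^L b_{2i}^l·(w_l^pre − w̄_l)) = ζ·(b₁ − Σ_{l=1}^L b̄_2^l·w̄_l) + β₀ + Σ_{l=1}^L (ζ·b̄_2^l − α)·((1 − τ_{il})·w̄_l + τ_{il}·w_l^pre). -/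
/-!
Averaging `b_{2i}^l = α τ_{il} / (ζ τ_l + u)` over the consumers only averages the numerators,
which gives `b̄_2^l`. Since `ζ b̄_2^l − α = −α u / (ζ τ_l + u)`, the coefficient of `w_l^pre − w̄_l`
on the right is `(ζ b̄_2^l − α) τ_{il} = −u b_{2i}^l`, matching the left, and `b₁` is exactly the
solution of the remaining constant balance `t − u b₁ = ζ b₁ + β₀ − α Σ_l w̄_l`.
-/

open Finset

variable {K : Type*} [Field K]

lemma sum_mul_div_div_eq {ι : Type*} (s : Finset ι) (f : ι → K) (a d N : K) :
    (∑ i ∈ s, a * f i / d) / N = a * ((∑ i ∈ s, f i) / N) / d := by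
  rw [← sum_div, ← mul_sum]
  ring

lemma sub_mul_eq_neg_mul_div {α ζ τbar u τ : K} (hd : ζ * τbar + u ≠ 0) :
    (ζ * (α * τbar / (ζ * τbar + u)) - α) * τ = -u * (α * τ / (ζ * τbar + u)) := by
  field_simp
  ring

lemma sub_mul_eq_of_eq_div {t β₀ α S ζ u b₁ : K} (hζu : ζ + u ≠ 0)
    (hb₁ : b₁ = (t - β₀ + α * S) / (ζ + u)) :
    t - u * b₁ = ζ * b₁ + β₀ - α * S := by
  rw [hb₁]
  field_simp
  ring

theorem stmt_1_general (α u t β₀ : ℝ) (hα : 0 < α) (hu : 0 < u)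
    (I L : ℕ)
    (ζ : ℝ) (hζ : ζ = (I : ℝ) * L * α)
    (τ : Fin (I * L) → Fin L → ℝ) (hτ : ∀ i l, τ i l ∈ Set.Icc (0 : ℝ) 1)
    (τbar : Fin L → ℝ) (hτbar : ∀ l, τbar l = (∑ i, τ i l) / ((I : ℝ) * L))
    (wbar : Fin L → ℝ)
    (b₁ : ℝ) (hb₁ : b₁ = (t - β₀ + α * ∑ l, wbar l) / (ζ + u))
    (b₂ : Fin (I * L) → Fin L → ℝ) (hb₂ : ∀ i l, b₂ i l = α * τ i l / (ζ * τbar l + u))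
    (b₂bar : Fin L → ℝ) (hb₂bar : ∀ l, b₂bar l = (∑ i, b₂ i l) / ((I : ℝ) * L)) :
    (∀ l, b₂bar l = α * τbar l / (ζ * τbar l + u)) ∧
    (∀ i, ∀ wpre : Fin L → ℝ,
      t - u * (b₁ + ∑ l, b₂ i l * (wpre l - wbar l)) =
        ζ * (b₁ - ∑ l, b₂bar l * wbar l) + β₀ +
          ∑ l, (ζ * b₂bar l - α) * ((1 - τ i l) * wbar l + τ i l * wpre l)) := by
  have hζ0 : 0 ≤ ζ := hζ ▸ by positivity
  have hden : ∀ l, ζ * τbar l + u ≠ 0 := fun l => by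
    have hτbar0 : 0 ≤ τbar l :=
      hτbar l ▸ div_nonneg (sum_nonneg fun i _ => (hτ i l).1) (by positivity)
    positivity
  have hb₂bar' : ∀ l, b₂bar l = α * τbar l / (ζ * τbar l + u) := fun l => by
    simp only [hb₂bar, hb₂, hτbar, sum_mul_div_div_eq]
  refine ⟨hb₂bar', fun i wpre => ?_⟩
  have hterm : ∀ l ∈ univ, (ζ * b₂bar l - α) * ((1 - τ i l) * wbar l + τ i l * wpre l) =
      -u * (b₂ i l * (wpre l - wbar l)) - α * wbar l + ζ * (b₂bar l * wbar l) := fun l _ => by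
    have hcoef := hb₂bar' l ▸ hb₂ i l ▸ sub_mul_eq_neg_mul_div (τ := τ i l) (hden l)
    linear_combination (wpre l - wbar l) * hcoef
  rw [sum_congr rfl hterm]
  simp only [sum_add_distrib, sum_sub_distrib, ← mul_sum]
  linarith [sub_mul_eq_of_eq_div (by positivity) hb₁]

/-- Proposition 1 (centralized scheme): the averaged coefficient identity and the
first-order optimality condition satisfied by the affine demand coefficients. -/
theorem stmt_1 (α u t β₀ : ℝ) (hα : 0 < α) (hu : 0 < u)
    (I L : ℕ) (hI : 0 < I) (hL : 0 < L)
    (ζ : ℝ) (hζ : ζ = (I : ℝ) * L * α)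
    (τ : Fin (I * L) → Fin L → ℝ) (hτ : ∀ i l, τ i l ∈ Set.Icc (0 : ℝ) 1)
    (τbar : Fin L → ℝ) (hτbar : ∀ l, τbar l = (∑ i, τ i l) / ((I : ℝ) * L))
    (wbar : Fin L → ℝ)
    (b₁ : ℝ) (hb₁ : b₁ = (t - β₀ + α * ∑ l, wbar l) / (ζ + u))
    (b₂ : Fin (I * L) → Fin L → ℝ) (hb₂ : ∀ i l, b₂ i l = α * τ i l / (ζ * τbar l + u))
    (b₂bar : Fin L → ℝ) (hb₂bar : ∀ l, b₂bar l = (∑ i, b₂ i l) / ((I : ℝ) * L)) :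
    (∀ l, b₂bar l = α * τbar l / (ζ * τbar l + u)) ∧
    (∀ i, ∀ wpre : Fin L → ℝ,
      t - u * (b₁ + ∑ l, b₂ i l * (wpre l - wbar l)) =
        ζ * (b₁ - ∑ l, b₂bar l * wbar l) + β₀ +
          ∑ l, (ζ * b₂bar l - α) * ((1 - τ i l) * wbar l + τ i l * wpre l)) :=
  stmt_1_general α u t β₀ hα hu I L ζ hζ τ hτ τbar hτbar wbar b₁ hb₁ b₂ hb₂ b₂bar hb₂bar
end

section
/- Fix reals α > 0, u > 0, t, β₀ and positive integers I, L, and set ζ := I·L·α. Let W_1,…,W_L be independent square-integrable real random variables with means w̄_l and variances σ_l² > 0. Fix τ_{il} ∈ (0,1] and τ_l ∈ (0,1] for each l, and let ε_1,…,ε_L be square-integrable random variables, independent of each other and of (W_1,…,W_L), with E[ε_l] = 0 and Var(ε_l) = σ_l²·(1 − τ_{il})/τ_{il}. Define b₁ := (t − β₀ + α·Σ_l w̄_l)/(ζ + u), b_{2i}^l := α·τ_{il}/(ζ·τ_l + u), and D_i := b₁ + Σ_{l=1}^L b_{2i}^l·(W_l + ε_l − w̄_l). Then E[(u/2)·D_i²]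 = (u/2)·[ b₁² + Σ_{l=1}^L α²·σ_l²·τ_{il}/(ζ·τ_l + u)² ]. -/
/-!
The demand is `D = b₁ + ∑ l, b₂ l * (Y l - w̄ l)` with `Y l = W l + ε l`. The summands are centred
and pairwise independent, so `E[D²] = b₁² + ∑ l, b₂ l ² * Var(Y l)`, and independence of `W l` and
`ε l` gives `Var(Y l) = σ_l² + σ_l² (1 - τ_{il}) / τ_{il} = σ_l² / τ_{il}`.
-/

open MeasureTheory ProbabilityTheory

section

variable {Ω ι : Type*} {mΩ : MeasurableSpace Ω} {μ : Measure Ω}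

lemma ProbabilityTheory.iIndepFun.indepFun_sumElim_add {β : Type*} {mβ : MeasurableSpace β}
    [Add β] [MeasurableAdd₂ β] {X Y : ι → Ω → β} (h : iIndepFun (Sum.elim X Y) μ)
    (hX : ∀ i, AEMeasurable (X i) μ) (hY : ∀ i, AEMeasurable (Y i) μ) {i j : ι} (hij : i ≠ j) :
    IndepFun (X i + Y i) (X j + Y j) μ :=
  h.indepFun_add_mul₀ (fun k => k.rec hX hY) (.inl i) (.inr i) (.inl j) (.inr j)
    (by simpa using hij) (by simp) (by simp) (by simpa using hij)

variable [IsProbabilityMeasure μ]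

lemma integral_sq_const_add {X : Ω → ℝ} (c : ℝ) (hX : MemLp X 2 μ) (hmean : μ[X] = 0) :
    ∫ ω, (c + X ω) ^ 2 ∂μ = c ^ 2 + Var[X; μ] := by
  have hX_int : Integrable X μ := hX.integrable one_le_two
  have hX_sq : ∫ ω, X ω ^ 2 ∂μ = Var[X; μ] := by
    rw [variance_eq_sub hX, hmean]
    simp
  calc ∫ ω, (c + X ω) ^ 2 ∂μ = ∫ ω, c ^ 2 + (2 * c * X ω + X ω ^ 2) ∂μ := by
        congr 1; ext ω; ring
    _ = c ^ 2 + (2 * c * μ[X] + ∫ ω, X ω ^ 2 ∂μ) := by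
        have h_lin : Integrable (fun ω => 2 * c * X ω) μ := hX_int.const_mul _
        have h_quad : Integrable (fun ω => 2 * c * X ω + X ω ^ 2) μ := h_lin.add hX.integrable_sq
        rw [integral_add (integrable_const _) h_quad, integral_add h_lin hX.integrable_sq,
          integral_const_mul]
        simp
    _ = c ^ 2 + Var[X; μ] := by rw [hmean, hX_sq]; ring

lemma integral_sq_const_add_sum_of_indepFun {s : Finset ι} {Z : ι → Ω → ℝ} (c : ℝ)
    (hZ : ∀ i ∈ s, MemLp (Z i) 2 μ) (hmean : ∀ i ∈ s, μ[Z i] = 0)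
    (hindep : Set.Pairwise ↑s fun i j => Z i ⟂ᵢ[μ] Z j) :
    ∫ ω, (c + ∑ i ∈ s, Z i ω) ^ 2 ∂μ = c ^ 2 + ∑ i ∈ s, Var[Z i; μ] := by
  have hsum_mean : μ[∑ i ∈ s, Z i] = 0 := by
    simp only [Finset.sum_apply]
    rw [integral_finsetSum s fun i hi => (hZ i hi).integrable one_le_two,
      Finset.sum_eq_zero hmean]
  have := integral_sq_const_add c (memLp_finsetSum' s hZ) hsum_mean
  simpa only [Finset.sum_apply, IndepFun.variance_sum hZ hindep] using this

lemma integral_sq_const_add_sum_mul_sub_of_indepFun {s : Finset ι} {Y : ι → Ω → ℝ}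
    (c : ℝ) (a m : ι → ℝ) (hY : ∀ i ∈ s, MemLp (Y i) 2 μ) (hmean : ∀ i ∈ s, μ[Y i] = m i)
    (hindep : Set.Pairwise ↑s fun i j => Y i ⟂ᵢ[μ] Y j) :
    ∫ ω, (c + ∑ i ∈ s, a i * (Y i ω - m i)) ^ 2 ∂μ = c ^ 2 + ∑ i ∈ s, a i ^ 2 * Var[Y i; μ] := by
  have hφ : ∀ i, Measurable fun y : ℝ => a i * (y - m i) := fun i => by fun_prop
  rw [integral_sq_const_add_sum_of_indepFun (Z := fun i ω => a i * (Y i ω - m i)) c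
    (fun i hi => ((hY i hi).sub (memLp_const _)).const_mul _)
    (fun i hi => by simp [integral_const_mul, integral_sub ((hY i hi).integrable one_le_two),
      hmean i hi])
    (fun i hi j hj hij => (hindep hi hj hij).comp (hφ i) (hφ j))]
  congr 1
  refine Finset.sum_congr rfl fun i hi => ?_
  rw [variance_const_mul, variance_sub_const (hY i hi).1]

end

lemma sq_mul_div_mul_add_mul_one_sub_div (α s τ d : ℝ) :
    (α * τ / d) ^ 2 * (s + s * (1 - τ) / τ) = α ^ 2 * s * τ / d ^ 2 := by
  rcases eq_or_ne τ 0 with rfl | hτ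
  · simp
  rcases eq_or_ne d 0 with rfl | hd
  · simp
  field_simp
  ring

theorem stmt_2_general {Ω : Type*} [MeasureSpace Ω] [IsProbabilityMeasure (ℙ : Measure Ω)]
    (α u : ℝ)
    (L : ℕ)
    (ζ : ℝ)
    (W : Fin L → Ω → ℝ) (hWLp : ∀ l, MemLp (W l) 2 ℙ)
    (wbar : Fin L → ℝ) (hwbar : ∀ l, ∫ ω, W l ω ∂ℙ = wbar l)
    (σ2 : Fin L → ℝ) (hσ2 : ∀ l, variance (W l) ℙ = σ2 l)
    (τi τ : Fin L → ℝ)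
    (ε : Fin L → Ω → ℝ) (hεLp : ∀ l, MemLp (ε l) 2 ℙ)
    (hεmean : ∀ l, ∫ ω, ε l ω ∂ℙ = 0)
    (hεvar : ∀ l, variance (ε l) ℙ = σ2 l * (1 - τi l) / τi l)
    -- the W's and ε's are all mutually independent
    (hindep : iIndepFun (Sum.elim W ε) ℙ)
    (b₁ : ℝ)
    (b₂ : Fin L → ℝ) (hb₂ : ∀ l, b₂ l = α * τi l / (ζ * τ l + u))
    (D : Ω → ℝ) (hD : D = fun ω => b₁ + ∑ l, b₂ l * (W l ω + ε l ω - wbar l)) :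
    ∫ ω, (u / 2) * D ω ^ 2 ∂ℙ =
      (u / 2) * (b₁ ^ 2 + ∑ l, α ^ 2 * σ2 l * τi l / (ζ * τ l + u) ^ 2) := by
  have hY : ∀ l, MemLp (W l + ε l) 2 ℙ := fun l => (hWLp l).add (hεLp l)
  have hY_mean : ∀ l, ℙ[W l + ε l] = wbar l := fun l => by
    rw [integral_add' ((hWLp l).integrable one_le_two) ((hεLp l).integrable one_le_two),
      hwbar, hεmean, add_zero]
  have hY_indep : Set.Pairwise ↑(Finset.univ : Finset (Fin L))
      fun l m => (W l + ε l) ⟂ᵢ[ℙ] (W m + ε m) := fun l _ m _ hlm =>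
    hindep.indepFun_sumElim_add (fun l => (hWLp l).aemeasurable) (fun l => (hεLp l).aemeasurable)
      hlm
  have hY_var : ∀ l, Var[W l + ε l; ℙ] = σ2 l + σ2 l * (1 - τi l) / τi l := fun l => by
    rw [IndepFun.variance_add (hWLp l) (hεLp l)
      (hindep.indepFun (i := .inl l) (j := .inr l) (by simp)), hσ2, hεvar]
  subst hD
  rw [integral_const_mul]
  congr 1
  calc ∫ ω, (b₁ + ∑ l, b₂ l * ((W l + ε l) ω - wbar l)) ^ 2 ∂ℙ
      = b₁ ^ 2 + ∑ l, b₂ l ^ 2 * Var[W l + ε l; ℙ] :=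
        integral_sq_const_add_sum_mul_sub_of_indepFun b₁ b₂ wbar (fun l _ => hY l)
          (fun l _ => hY_mean l) hY_indep
    _ = _ := by simp only [hY_var, hb₂, sq_mul_div_mul_add_mul_one_sub_div]

/-- Equation (11) (centralized scheme): the expected net utility of a consumer using
the optimal affine demand policy based on noisy predictions `W_l + ε_l`. -/
theorem stmt_2 {Ω : Type*} [MeasureSpace Ω] [IsProbabilityMeasure (ℙ : Measure Ω)]
    (α u t β₀ : ℝ) (hα : 0 < α) (hu : 0 < u)
    (I L : ℕ) (hI : 0 < I) (hL : 0 < L)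
    (ζ : ℝ) (hζ : ζ = (I : ℝ) * L * α)
    (W : Fin L → Ω → ℝ) (hWLp : ∀ l, MemLp (W l) 2 ℙ)
    (wbar : Fin L → ℝ) (hwbar : ∀ l, ∫ ω, W l ω ∂ℙ = wbar l)
    (σ2 : Fin L → ℝ) (hσ2 : ∀ l, variance (W l) ℙ = σ2 l) (hσ2pos : ∀ l, 0 < σ2 l)
    (τi τ : Fin L → ℝ) (hτi : ∀ l, τi l ∈ Set.Ioc (0 : ℝ) 1) (hτ : ∀ l, τ l ∈ Set.Ioc (0 : ℝ) 1)
    (ε : Fin L → Ω → ℝ) (hεLp : ∀ l, MemLp (ε l) 2 ℙ)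
    (hεmean : ∀ l, ∫ ω, ε l ω ∂ℙ = 0)
    (hεvar : ∀ l, variance (ε l) ℙ = σ2 l * (1 - τi l) / τi l)
    -- the W's and ε's are all mutually independent
    (hindep : iIndepFun (Sum.elim W ε) ℙ)
    (b₁ : ℝ) (hb₁ : b₁ = (t - β₀ + α * ∑ l, wbar l) / (ζ + u))
    (b₂ : Fin L → ℝ) (hb₂ : ∀ l, b₂ l = α * τi l / (ζ * τ l + u))
    (D : Ω → ℝ) (hD : D = fun ω => b₁ + ∑ l, b₂ l * (W l ω + ε l ω - wbar l)) :
    ∫ ω, (u / 2) * D ω ^ 2 ∂ℙ =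
      (u / 2) * (b₁ ^ 2 + ∑ l, α ^ 2 * σ2 l * τi l / (ζ * τ l + u) ^ 2) :=
  stmt_2_general α u L ζ W hWLp wbar hwbar σ2 hσ2 τi τ ε hεLp hεmean hεvar hindep b₁ b₂ hb₂ D hD
end

section
/- Fix reals α > 0, u > 0, m > 0, σ² > 0 and positive integers I, L, and set ζ := I·L·α. Define τ* := max(0, (σ² − √(2·m·u/(I·L))/α)/(σ² + √(2·m·I·L/u))). Then τ* ∈ [0,1), and τ* is the unique maximizer over x ∈ [0,1) of the function g(x) := (u/2)·α²·σ²·x/(ζ·τ* + u)² − (m/(I·L·σ²))·x/(1 − x). -/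
/-!
The net benefit `g x = A x - B x/(1-x)` with `A, B > 0` is strictly concave on `[0,1)`, so a point
satisfying the first-order (KKT) condition is its unique maximizer: either the corner `t = 0` with
`A ≤ B`, or the interior condition `A (1-t)² = B`, under which `g t - g x = A (x-t)²/(1-x)`. Substituting `k = √(u I L / (2m))` turns both
square roots in `τ*` into `u/k` and `I L / k`, and then the interior condition at the symmetric
equilibrium becomes linear in `τ*`: `ζ τ* + u = k α σ² (1 - τ*)`, whose root is exactly `τ*`.
-/

open Real Set

noncomputable def netBenefit (A B x : ℝ) : ℝ := A * x - B * (x / (1 - x))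

def KKTPoint (A B t : ℝ) : Prop := (t = 0 ∧ A ≤ B) ∨ A * (1 - t) ^ 2 = B

section NetBenefit

variable {A B t x : ℝ}

lemma netBenefit_sub_netBenefit_of_sq_eq (hAB : A * (1 - t) ^ 2 = B) (hx : x < 1) (ht : t < 1) :
    netBenefit A B t - netBenefit A B x = A * (x - t) ^ 2 / (1 - x) := by
  have hx' : 1 - x ≠ 0 := by linarith
  have ht' : 1 - t ≠ 0 := by linarith
  rw [netBenefit, netBenefit, ← hAB]
  field_simp
  ring

lemma netBenefit_lt_of_sq_eq (hA : 0 < A) (hAB : A * (1 - t) ^ 2 = B) (hx : x < 1) (ht : t < 1)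
    (hxt : x ≠ t) : netBenefit A B x < netBenefit A B t := by
  have hxt' : x - t ≠ 0 := sub_ne_zero.mpr hxt
  have hx' : 0 < 1 - x := by linarith
  have := netBenefit_sub_netBenefit_of_sq_eq hAB hx ht
  have : 0 < A * (x - t) ^ 2 / (1 - x) := by positivity
  linarith

lemma netBenefit_neg_of_le (hAB : A ≤ B) (hB : 0 < B) (hx₀ : 0 < x) (hx₁ : x < 1) :
    netBenefit A B x < 0 := by
  have hlt : x < x / (1 - x) := by
    rw [lt_div_iff₀ (by linarith)]
    nlinarith
  have : A * x ≤ B * x := mul_le_mul_of_nonneg_right hAB hx₀.le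
  have : B * x < B * (x / (1 - x)) := mul_lt_mul_of_pos_left hlt hB
  rw [netBenefit]
  linarith

lemma KKTPoint.netBenefit_lt (h : KKTPoint A B t) (hA : 0 < A) (hB : 0 < B) (ht : t < 1)
    (hx : x ∈ Ico 0 1) (hxt : x ≠ t) : netBenefit A B x < netBenefit A B t := by
  rcases h with ⟨rfl, hAB⟩ | hAB
  · simpa [netBenefit] using netBenefit_neg_of_le hAB hB (lt_of_le_of_ne hx.1 hxt.symm) hx.2
  · exact netBenefit_lt_of_sq_eq hA hAB hx.2 ht hxt

end NetBenefit

section Equilibrium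

variable {α u m σ2 n k : ℝ}

lemma sqrt_eq_div_of_sq_eq_sq_mul {x y : ℝ} (hk : 0 < k) (hy : 0 < y) (h : y ^ 2 = k ^ 2 * x) :
    √x = y / k := by
  rw [Real.sqrt_eq_iff_mul_self_eq_of_pos (by positivity)]
  field_simp
  linear_combination h

lemma max_zero_div_mem_Ico (hα : 0 < α) (hu : 0 < u) (hσ2 : 0 < σ2) (hn : 0 < n) (hk : 0 < k) :
    max 0 ((σ2 - u / (k * α)) / (σ2 + n / k)) ∈ Ico 0 1 := by
  refine ⟨le_max_left _ _, max_lt one_pos ?_⟩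
  rw [div_lt_one (by positivity)]
  have : 0 < u / (k * α) := by positivity
  have : 0 < n / k := by positivity
  linarith

lemma kktPoint_max_zero_div (hα : 0 < α) (hu : 0 < u) (hm : 0 < m) (hσ2 : 0 < σ2) (hn : 0 < n)
    (hk : 0 < k) (hkm : 2 * m * k ^ 2 = u * n) :
    KKTPoint (u / 2 * α ^ 2 * σ2 / (n * α * max 0 ((σ2 - u / (k * α)) / (σ2 + n / k)) + u) ^ 2)
      (m / (n * σ2)) (max 0 ((σ2 - u / (k * α)) / (σ2 + n / k))) := by
  set τ := max 0 ((σ2 - u / (k * α)) / (σ2 + n / k)) with hτ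
  rcases le_or_gt (k * α * σ2) u with hcorner | hinterior
  · have hτ0 : τ = 0 := by
      refine max_eq_left (div_nonpos_of_nonpos_of_nonneg ?_ (by positivity))
      rw [sub_nonpos, le_div_iff₀ (by positivity)]
      linarith
    refine Or.inl ⟨hτ0, ?_⟩
    rw [hτ0, mul_zero, zero_add, div_le_div_iff₀ (by positivity) (by positivity)]
    calc u / 2 * α ^ 2 * σ2 * (n * σ2) = m * (k * α * σ2) ^ 2 := by
          linear_combination (-(α ^ 2 * σ2 ^ 2 / 2)) * hkm
      _ ≤ m * u ^ 2 := by gcongr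
  · have hτv : τ = (k * α * σ2 - u) / (α * (k * σ2 + n)) := by
      rw [hτ, max_eq_right]
      · field_simp
      · exact div_nonneg (by rw [sub_nonneg, div_le_iff₀ (by positivity)]; linarith)
          (by positivity)
    have h1τ : 0 < 1 - τ := by
      rw [hτv, sub_pos, div_lt_one (by positivity)]
      nlinarith
    have hfoc : n * α * τ + u = k * α * σ2 * (1 - τ) := by
      rw [hτv]
      field_simp
      ring
    refine Or.inr ?_
    rw [hfoc, div_mul_eq_mul_div, div_eq_div_iff (by positivity) (by positivity)]
    linear_combination (-(α ^ 2 * σ2 ^ 2 * (1 - τ) ^ 2 / 2)) * hkm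

end Equilibrium

/-- Proposition 2 (centralized scheme): the symmetric-equilibrium optimal prediction
precision `τ*` is the unique maximizer of the expected net benefit over `[0,1)`. -/
theorem stmt_3 (α u m σ2 : ℝ) (hα : 0 < α) (hu : 0 < u) (hm : 0 < m) (hσ2 : 0 < σ2)
    (I L : ℕ) (hI : 0 < I) (hL : 0 < L)
    (ζ : ℝ) (hζ : ζ = (I : ℝ) * L * α)
    (τstar : ℝ)
    (hτ : τstar = max 0 ((σ2 - Real.sqrt (2 * m * u / ((I : ℝ) * L)) / α) /
        (σ2 + Real.sqrt (2 * m * (I : ℝ) * L / u))))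
    (g : ℝ → ℝ)
    (hg : g = fun x => (u / 2) * α ^ 2 * σ2 * x / (ζ * τstar + u) ^ 2 -
        (m / ((I : ℝ) * L * σ2)) * (x / (1 - x))) :
    τstar ∈ Set.Ico (0 : ℝ) 1 ∧
      ∀ x ∈ Set.Ico (0 : ℝ) 1, x ≠ τstar → g x < g τstar := by
  set n : ℝ := I * L
  have hn : 0 < n := by positivity
  obtain ⟨k, hk, hkm⟩ : ∃ k : ℝ, 0 < k ∧ 2 * m * k ^ 2 = u * n :=
    ⟨√(u * n / (2 * m)), by positivity, by rw [sq_sqrt (by positivity)]; field_simp⟩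
  rw [show 2 * m * (I : ℝ) * L = 2 * m * n by ring,
    sqrt_eq_div_of_sq_eq_sq_mul hk hu (by field_simp; linear_combination -hkm),
    sqrt_eq_div_of_sq_eq_sq_mul hk hn (by field_simp; linear_combination -hkm), div_div] at hτ
  subst hτ hζ hg
  have hτ_mem := max_zero_div_mem_Ico hα hu hσ2 hn hk
  refine ⟨hτ_mem, fun x hx hxt => ?_⟩
  have := (kktPoint_max_zero_div hα hu hm hσ2 hn hk hkm).netBenefit_lt (by positivity)
    (by positivity) hτ_mem.2 hx hxt
  simp only [netBenefit] at this
  convert this using 1 <;> ring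
end

section
/- Fix reals α > 0, u > 0, t, β₀ and positive integers I, L, and set ζ := I·L·α. Let W_1,…,W_L be independent square-integrable real random variables with means w̄_l and variances σ_l² > 0; fix τ_l ∈ (0,1] for each l; let ε_1,…,ε_L be square-integrable random variables, independent of each other and of (W_1,…,W_L), with E[ε_l] = 0 and Var(ε_l) = σ_l²·(1 − τ_l)/τ_l. Set b₁ := (t − β₀ + α·Σ_l w̄_l)/(ζ + u), b_2^l := α·τ_l/(ζ·τ_l + u), D := b₁ + Σ_l b_2^l·(W_l + ε_l − w̄_l) and D̄ := b₁ + Σ_l b_2^l·(W_l − w̄_l). Then I·L·E[ −(u/2)·D² + t·D ] − E[ (α/2)·(I·L·D̄)² + (β₀ − α·Σ_l W_l)·(I·L·D̄) ] = I·L·(u+ζ)/2·b₁² + (α·I·L/2)·Σ_{l=1}^L b_2^l·σ_l². -/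
/-!
`D` and `D̄` are affine functions of the centred variables `W_l + ε_l - w̄_l`, resp. `W_l - w̄_l`,
which are pairwise independent. Both integrands factor as products of two such affine functions,
and the expectation of such a product is the product of the constant terms plus
`Σ_l aₗ bₗ Var`, since all cross covariances vanish. The first-order conditions
`b₁ (ζ + u) = t - β₀ + α Σ w̄_l` and `b₂^l (ζ τ_l + u) = α τ_l` defining the coefficients then
collapse the resulting expression.
-/

open MeasureTheory ProbabilityTheory

section AffineCombination

variable {Ω ι : Type*} {mΩ : MeasurableSpace Ω} {μ : Measure Ω} [IsProbabilityMeasure μ]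
  [Fintype ι] {Y : ι → Ω → ℝ} {m : ι → ℝ}

lemma memLp_const_add_sum_mul_sub (hY : ∀ i, MemLp (Y i) 2 μ) (c : ℝ) (a m : ι → ℝ) :
    MemLp (fun ω ↦ c + ∑ i, a i * (Y i ω - m i)) 2 μ :=
  (memLp_const c).add (memLp_finsetSum _ fun i _ ↦ ((hY i).sub (memLp_const (m i))).const_mul (a i))

lemma integral_const_add_sum_mul_sub (hY : ∀ i, Integrable (Y i) μ) (hm : ∀ i, μ[Y i] = m i)
    (c : ℝ) (a : ι → ℝ) :
    ∫ ω, (c + ∑ i, a i * (Y i ω - m i)) ∂μ = c := by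
  have hint : ∀ i, Integrable (fun ω ↦ a i * (Y i ω - m i)) μ :=
    fun i ↦ ((hY i).sub (integrable_const _)).const_mul _
  rw [integral_add (integrable_const c) (integrable_finsetSum _ fun i _ ↦ hint i),
    integral_finsetSum _ fun i _ ↦ hint i]
  simp [integral_const_mul, integral_sub (hY _) (integrable_const _), hm]

lemma covariance_const_add_sum_mul_sub (hY : ∀ i, MemLp (Y i) 2 μ)
    (hindep : Pairwise fun i j ↦ Y i ⟂ᵢ[μ] Y j) (c d : ℝ) (a b m : ι → ℝ) :
    cov[fun ω ↦ c + ∑ i, a i * (Y i ω - m i), fun ω ↦ d + ∑ i, b i * (Y i ω - m i); μ] =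
      ∑ i, a i * b i * Var[Y i; μ] := by
  have hterm : ∀ (r : ι → ℝ) i, MemLp (fun ω ↦ r i * (Y i ω - m i)) 2 μ :=
    fun r i ↦ ((hY i).sub (memLp_const (m i))).const_mul (r i)
  rw [covariance_const_add_left ((memLp_finsetSum _ fun i _ ↦ hterm a i).integrable one_le_two),
    covariance_const_add_right ((memLp_finsetSum _ fun i _ ↦ hterm b i).integrable one_le_two),
    covariance_fun_sum_fun_sum (hterm a) (hterm b)]
  refine Finset.sum_congr rfl fun i _ ↦ ?_
  have hYi := (hY i).integrable one_le_two
  rw [Fintype.sum_eq_single i fun j hji ↦ ?_]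
  · rw [covariance_const_mul_left, covariance_const_mul_right, covariance_sub_const_left hYi,
      covariance_sub_const_right hYi, covariance_self (hY i).aemeasurable, mul_assoc]
  · rw [covariance_const_mul_left, covariance_const_mul_right, covariance_sub_const_left hYi,
      covariance_sub_const_right ((hY j).integrable one_le_two),
      (hindep hji.symm).covariance_eq_zero (hY i) (hY j), mul_zero, mul_zero]

lemma integral_mul_const_add_sum_mul_sub (hY : ∀ i, MemLp (Y i) 2 μ)
    (hindep : Pairwise fun i j ↦ Y i ⟂ᵢ[μ] Y j) (hm : ∀ i, μ[Y i] = m i) (c d : ℝ) (a b : ι → ℝ) :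
    ∫ ω, (c + ∑ i, a i * (Y i ω - m i)) * (d + ∑ i, b i * (Y i ω - m i)) ∂μ =
      c * d + ∑ i, a i * b i * Var[Y i; μ] := by
  have h := covariance_eq_sub (memLp_const_add_sum_mul_sub hY c a m)
    (memLp_const_add_sum_mul_sub hY d b m)
  rw [covariance_const_add_sum_mul_sub hY hindep,
    integral_const_add_sum_mul_sub (fun i ↦ (hY i).integrable one_le_two) hm,
    integral_const_add_sum_mul_sub (fun i ↦ (hY i).integrable one_le_two) hm] at h
  simp only [Pi.mul_apply] at h
  linarith

lemma integral_quadratic_utility (hY : ∀ i, MemLp (Y i) 2 μ)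
    (hindep : Pairwise fun i j ↦ Y i ⟂ᵢ[μ] Y j) (hm : ∀ i, μ[Y i] = m i) (u t c : ℝ) (a : ι → ℝ) :
    ∫ ω, (-(u / 2) * (c + ∑ i, a i * (Y i ω - m i)) ^ 2 + t * (c + ∑ i, a i * (Y i ω - m i))) ∂μ =
      c * (t - u / 2 * c) + ∑ i, a i * (-(u / 2) * a i) * Var[Y i; μ] := by
  rw [← integral_mul_const_add_sum_mul_sub hY hindep hm]
  congr 1 with ω
  simp only [mul_assoc, ← Finset.mul_sum]
  ring

lemma integral_linear_price_cost (hY : ∀ i, MemLp (Y i) 2 μ)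
    (hindep : Pairwise fun i j ↦ Y i ⟂ᵢ[μ] Y j) (hm : ∀ i, μ[Y i] = m i)
    (α β k c : ℝ) (a : ι → ℝ) :
    ∫ ω, (α / 2 * (k * (c + ∑ i, a i * (Y i ω - m i))) ^ 2 +
      (β - α * ∑ i, Y i ω) * (k * (c + ∑ i, a i * (Y i ω - m i)))) ∂μ =
      k * c * (α / 2 * k * c + β - α * ∑ i, m i) +
        ∑ i, k * a i * (α / 2 * k * a i - α) * Var[Y i; μ] := by
  rw [← integral_mul_const_add_sum_mul_sub hY hindep hm]
  congr 1 with ω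
  simp only [sub_mul, Finset.sum_sub_distrib, mul_assoc, ← Finset.mul_sum]
  ring

end AffineCombination

lemma ProbabilityTheory.iIndepFun.pairwise_indepFun_add_sumElim {Ω ι : Type*}
    {mΩ : MeasurableSpace Ω} {μ : Measure Ω} {W ε : ι → Ω → ℝ} (h : iIndepFun (Sum.elim W ε) μ)
    (hW : ∀ i, AEMeasurable (W i) μ) (hε : ∀ i, AEMeasurable (ε i) μ) :
    Pairwise fun i j ↦ (fun ω ↦ W i ω + ε i ω) ⟂ᵢ[μ] fun ω ↦ W j ω + ε j ω := by
  intro i j hij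
  have hmeas : ∀ k, AEMeasurable (Sum.elim W ε k) μ := by
    rintro (k | k)
    exacts [hW k, hε k]
  exact (h.indepFun_prodMk_prodMk₀ hmeas _ _ _ _ (Sum.inl_injective.ne hij) Sum.inl_ne_inr
    Sum.inr_ne_inl (Sum.inr_injective.ne hij)).comp measurable_add measurable_add

lemma surplus_variance_term_eq {α u k τ b σ : ℝ} (hα : 0 < α) (hu : 0 < u)
    (hk : 0 ≤ k) (hτ : 0 < τ) (hb : b = α * τ / (k * α * τ + u)) :
    k * (b * (-(u / 2) * b) * (σ + σ * (1 - τ) / τ)) - k * b * (α / 2 * k * b - α) * σ =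
      α * k / 2 * (b * σ) := by
  have hb' : b * (k * α * τ + u) = α * τ := by
    rw [hb]; field_simp
  field_simp
  linear_combination (-(k * b * σ)) * hb'

theorem stmt_8_general {Ω : Type*} [MeasureSpace Ω] [IsProbabilityMeasure (ℙ : Measure Ω)]
    (α u t β₀ : ℝ) (hα : 0 < α) (hu : 0 < u)
    (I L : ℕ)
    (ζ : ℝ) (hζ : ζ = (I : ℝ) * L * α)
    (W : Fin L → Ω → ℝ) (hWLp : ∀ l, MemLp (W l) 2 ℙ)
    (wbar : Fin L → ℝ) (hwbar : ∀ l, ∫ ω, W l ω ∂ℙ = wbar l)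
    (σ2 : Fin L → ℝ) (hσ2 : ∀ l, variance (W l) ℙ = σ2 l)
    (τ : Fin L → ℝ) (hτ : ∀ l, τ l ∈ Set.Ioc (0 : ℝ) 1)
    (ε : Fin L → Ω → ℝ) (hεLp : ∀ l, MemLp (ε l) 2 ℙ)
    (hεmean : ∀ l, ∫ ω, ε l ω ∂ℙ = 0)
    (hεvar : ∀ l, variance (ε l) ℙ = σ2 l * (1 - τ l) / τ l)
    -- the W's and ε's are all mutually independent
    (hindep : iIndepFun (Sum.elim W ε) ℙ)
    (b₁ : ℝ) (hb₁ : b₁ = (t - β₀ + α * ∑ l, wbar l) / (ζ + u))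
    (b₂ : Fin L → ℝ) (hb₂ : ∀ l, b₂ l = α * τ l / (ζ * τ l + u))
    (D : Ω → ℝ) (hD : D = fun ω => b₁ + ∑ l, b₂ l * (W l ω + ε l ω - wbar l))
    (Dbar : Ω → ℝ) (hDbar : Dbar = fun ω => b₁ + ∑ l, b₂ l * (W l ω - wbar l)) :
    (I : ℝ) * L * ∫ ω, (-(u / 2) * D ω ^ 2 + t * D ω) ∂ℙ -
        ∫ ω, ((α / 2) * ((I : ℝ) * L * Dbar ω) ^ 2 +
          (β₀ - α * ∑ l, W l ω) * ((I : ℝ) * L * Dbar ω)) ∂ℙ =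
      (I : ℝ) * L * (u + ζ) / 2 * b₁ ^ 2 + (α * I * L / 2) * ∑ l, b₂ l * σ2 l := by
  subst hD hDbar hζ
  have hVLp : ∀ l, MemLp (fun ω ↦ W l ω + ε l ω) 2 ℙ := fun l ↦ (hWLp l).add (hεLp l)
  have hVmean : ∀ l, ℙ[fun ω ↦ W l ω + ε l ω] = wbar l := fun l ↦ by
    rw [integral_add ((hWLp l).integrable one_le_two) ((hεLp l).integrable one_le_two),
      hwbar, hεmean, add_zero]
  have hVvar : ∀ l, Var[fun ω ↦ W l ω + ε l ω; ℙ] = σ2 l + σ2 l * (1 - τ l) / τ l := fun l ↦ by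
    rw [(hindep.indepFun Sum.inl_ne_inr).variance_fun_add (hWLp l) (hεLp l), hσ2, hεvar]
  have hVV := hindep.pairwise_indepFun_add_sumElim (fun l ↦ (hWLp l).aemeasurable)
    (fun l ↦ (hεLp l).aemeasurable)
  have hWW : Pairwise fun l k ↦ W l ⟂ᵢ[ℙ] W k :=
    fun l k hlk ↦ hindep.indepFun (Sum.inl_injective.ne hlk)
  simp only [integral_quadratic_utility hVLp hVV hVmean,
    integral_linear_price_cost hWLp hWW hwbar, hVvar, hσ2]
  have hb₁' : b₁ * (I * L * α + u) = t - β₀ + α * ∑ l, wbar l := by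
    rw [hb₁]; field_simp
  have hsum : (I : ℝ) * L * ∑ l, b₂ l * (-(u / 2) * b₂ l) * (σ2 l + σ2 l * (1 - τ l) / τ l) -
      ∑ l, (I * L * b₂ l) * (α / 2 * (I * L) * b₂ l - α) * σ2 l =
        α * (I * L) / 2 * ∑ l, b₂ l * σ2 l := by
    rw [Finset.mul_sum, Finset.mul_sum, ← Finset.sum_sub_distrib]
    exact Finset.sum_congr rfl fun l _ ↦
      surplus_variance_term_eq hα hu (by positivity) (hτ l).1 (hb₂ l)
  linear_combination (-(I * L * b₁)) * hb₁' + hsum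

/-- Key identity in the proof of Theorem 1: the conditionally expected total surplus
under centralized predictions equals `IL·(u+ζ)/2·b₁² + (α·IL/2)·Σ_l b₂^l·σ_l²`. -/
theorem stmt_8 {Ω : Type*} [MeasureSpace Ω] [IsProbabilityMeasure (ℙ : Measure Ω)]
    (α u t β₀ : ℝ) (hα : 0 < α) (hu : 0 < u)
    (I L : ℕ) (hI : 0 < I) (hL : 0 < L)
    (ζ : ℝ) (hζ : ζ = (I : ℝ) * L * α)
    (W : Fin L → Ω → ℝ) (hWLp : ∀ l, MemLp (W l) 2 ℙ)
    (wbar : Fin L → ℝ) (hwbar : ∀ l, ∫ ω, W l ω ∂ℙ = wbar l)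
    (σ2 : Fin L → ℝ) (hσ2 : ∀ l, variance (W l) ℙ = σ2 l) (hσ2pos : ∀ l, 0 < σ2 l)
    (τ : Fin L → ℝ) (hτ : ∀ l, τ l ∈ Set.Ioc (0 : ℝ) 1)
    (ε : Fin L → Ω → ℝ) (hεLp : ∀ l, MemLp (ε l) 2 ℙ)
    (hεmean : ∀ l, ∫ ω, ε l ω ∂ℙ = 0)
    (hεvar : ∀ l, variance (ε l) ℙ = σ2 l * (1 - τ l) / τ l)
    -- the W's and ε's are all mutually independent
    (hindep : iIndepFun (Sum.elim W ε) ℙ)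
    (b₁ : ℝ) (hb₁ : b₁ = (t - β₀ + α * ∑ l, wbar l) / (ζ + u))
    (b₂ : Fin L → ℝ) (hb₂ : ∀ l, b₂ l = α * τ l / (ζ * τ l + u))
    (D : Ω → ℝ) (hD : D = fun ω => b₁ + ∑ l, b₂ l * (W l ω + ε l ω - wbar l))
    (Dbar : Ω → ℝ) (hDbar : Dbar = fun ω => b₁ + ∑ l, b₂ l * (W l ω - wbar l)) :
    (I : ℝ) * L * ∫ ω, (-(u / 2) * D ω ^ 2 + t * D ω) ∂ℙ -
        ∫ ω, ((α / 2) * ((I : ℝ) * L * Dbar ω) ^ 2 +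
          (β₀ - α * ∑ l, W l ω) * ((I : ℝ) * L * Dbar ω)) ∂ℙ =
      (I : ℝ) * L * (u + ζ) / 2 * b₁ ^ 2 + (α * I * L / 2) * ∑ l, b₂ l * σ2 l :=
  stmt_8_general α u t β₀ hα hu I L ζ hζ W hWLp wbar hwbar σ2 hσ2 τ hτ ε hεLp hεmean hεvar hindep b₁
    hb₁ b₂ hb₂ D hD Dbar hDbar
end

section
/- Fix reals α > 0, u > 0, t and a positive integer I, and set γ := I·α. For a subregion l, fix β_l ∈ ℝ, w̄_l ∈ ℝ and precisions τ_{il} ∈ [0,1] for i = 1,…,I, with average τ_l := (1/I)·Σ_{i=1}^I τ_{il}. Define b̂_1^l := (t − β_l + α·w̄_l)/(γ + u), b̂_{2i}^l := α·τ_{il}/(γ·τ_l + u), and b̂_2^l := (1/I)·Σ_{i=1}^I b̂_{2i}^l. Then b̂_2^l = α·τ_l/(γ·τ_l + u), and for every i and every w^pre ∈ ℝ the first-order optimality condition holds: t − u·(b̂_1^l + b̂_{2i}^l·(w^pre − w̄_l)) = γ·(b̂_1^l − b̂_2^l·w̄_l) + β_l + (γ·b̂_2^l − α)·((1 − τ_{il})·w̄_l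 + τ_{il}·w^pre). -/
/-!
The average of the slopes `α τᵢ / (γ τ̄ + u)` is `α τ̄ / (γ τ̄ + u)` by linearity of the mean.
Both sides of the optimality condition are affine in `wpre - wbar`: the constant terms agree
because `(γ + u) b₁ = t - β + α wbar`, and the slopes agree because
`α - γ b̄₂ = α u / (γ τ̄ + u)`, so that `u b₂ᵢ = (α - γ b̄₂) τᵢ`.
-/

open Finset

theorem sum_mul_div_div {ι K : Type*} [Field K] (s : Finset ι) (f : ι → K) (a d n : K) :
    (∑ i ∈ s, a * f i / d) / n = a * ((∑ i ∈ s, f i) / n) / d := by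
  rw [← sum_div, ← mul_sum]
  ring

theorem optimality_condition_of_coeffs {K : Type*} [CommRing K]
    {α β γ u t b₁ b₂ b₂bar τ wbar wpre : K}
    (h₁ : (γ + u) * b₁ = t - β + α * wbar) (h₂ : u * b₂ = (α - γ * b₂bar) * τ) :
    t - u * (b₁ + b₂ * (wpre - wbar)) =
      γ * (b₁ - b₂bar * wbar) + β + (γ * b₂bar - α) * ((1 - τ) * wbar + τ * wpre) := by
  linear_combination -h₁ - (wpre - wbar) * h₂

theorem stmt_9_general (α u t : ℝ) (hα : 0 < α) (hu : 0 < u)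
    (I : ℕ)
    (γ : ℝ) (hγ : γ = (I : ℝ) * α)
    (βl wbar : ℝ)
    (τ : Fin I → ℝ) (hτ : ∀ i, τ i ∈ Set.Icc (0 : ℝ) 1)
    (τbar : ℝ) (hτbar : τbar = (∑ i, τ i) / (I : ℝ))
    (b₁ : ℝ) (hb₁ : b₁ = (t - βl + α * wbar) / (γ + u))
    (b₂ : Fin I → ℝ) (hb₂ : ∀ i, b₂ i = α * τ i / (γ * τbar + u))
    (b₂bar : ℝ) (hb₂bar : b₂bar = (∑ i, b₂ i) / (I : ℝ)) :
    b₂bar = α * τbar / (γ * τbar + u) ∧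
    (∀ i, ∀ wpre : ℝ,
      t - u * (b₁ + b₂ i * (wpre - wbar)) =
        γ * (b₁ - b₂bar * wbar) + βl +
          (γ * b₂bar - α) * ((1 - τ i) * wbar + τ i * wpre)) := by
  have hγ₀ : 0 ≤ γ := hγ ▸ by positivity
  have hτbar₀ : 0 ≤ τbar := hτbar ▸ div_nonneg (sum_nonneg fun i _ ↦ (hτ i).1) I.cast_nonneg
  have hD : γ * τbar + u ≠ 0 := by positivity
  have hγu : γ + u ≠ 0 := by positivity
  have hb₂bar' : b₂bar = α * τbar / (γ * τbar + u) := by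
    simp only [hb₂bar, hb₂, hτbar, sum_mul_div_div]
  refine ⟨hb₂bar', fun i wpre ↦ optimality_condition_of_coeffs ?_ ?_⟩
  · rw [hb₁]
    field_simp
  · rw [hb₂ i, hb₂bar']
    field_simp
    ring

/-- Proposition 3 (decentralized scheme): the averaged coefficient identity and the
first-order optimality condition for the affine demand coefficients in subregion `l`. -/
theorem stmt_9 (α u t : ℝ) (hα : 0 < α) (hu : 0 < u)
    (I : ℕ) (hI : 0 < I)
    (γ : ℝ) (hγ : γ = (I : ℝ) * α)
    (βl wbar : ℝ)
    (τ : Fin I → ℝ) (hτ : ∀ i, τ i ∈ Set.Icc (0 : ℝ) 1)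
    (τbar : ℝ) (hτbar : τbar = (∑ i, τ i) / (I : ℝ))
    (b₁ : ℝ) (hb₁ : b₁ = (t - βl + α * wbar) / (γ + u))
    (b₂ : Fin I → ℝ) (hb₂ : ∀ i, b₂ i = α * τ i / (γ * τbar + u))
    (b₂bar : ℝ) (hb₂bar : b₂bar = (∑ i, b₂ i) / (I : ℝ)) :
    b₂bar = α * τbar / (γ * τbar + u) ∧
    (∀ i, ∀ wpre : ℝ,
      t - u * (b₁ + b₂ i * (wpre - wbar)) =
        γ * (b₁ - b₂bar * wbar) + βl +
          (γ * b₂bar - α) * ((1 - τ i) * wbar + τ i * wpre)) :=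
  stmt_9_general α u t hα hu I γ hγ βl wbar τ hτ τbar hτbar b₁ hb₁ b₂ hb₂ b₂bar hb₂bar
end

section
/- Fix reals α > 0, u > 0, m > 0, σ² > 0 and a positive integer I, and set γ := I·α. Define τ* := max(0, (σ² − √(2·m·u/I)/α)/(σ² + √(2·m·I/u))). Then τ* ∈ [0,1), and τ* is the unique maximizer over x ∈ [0,1) of the function g(x) := (u/2)·α²·σ²·x/(γ·τ* + u)² − (m/(I·σ²))·x/(1 − x). -/
/-!
The net benefit `g x = A x - B x / (1 - x)` is strictly concave on `[0, 1)`, so `τ*` is its unique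
maximizer once it satisfies the first-order condition: `τ* = 0` with `g' 0 ≤ 0`, or `g' τ* = 0`.
With `s = √(2mu/I)/α` and `t = √(2mI/u)` one has `u t = γ s`, and this makes
`τ* = (σ² - s)/(σ² + t)` solve `u σ² (1 - τ) = s (γ τ + u)` when `σ² > s`; the sign of `g' τ` is
that of `u σ² (1 - τ) - s (γ τ + u)`.
-/

open Real

section NetBenefit

variable {a b τ x : ℝ}

theorem mul_sub_mul_div_one_sub_sub (hx : x ≠ 1) (hτ : τ ≠ 1) :
    (a * x - b * (x / (1 - x))) - (a * τ - b * (τ / (1 - τ))) =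
      (x - τ) * (a * (1 - x) * (1 - τ) - b) / ((1 - x) * (1 - τ)) := by
  have hx' : 1 - x ≠ 0 := sub_ne_zero.mpr hx.symm
  have hτ' : 1 - τ ≠ 0 := sub_ne_zero.mpr hτ.symm
  field_simp
  ring

/-- `hfoc` is the Karush–Kuhn–Tucker condition for the concave function `x ↦ a x - b x / (1 - x)`
on `[0, 1)`, whose derivative is `a - b / (1 - x) ^ 2`. -/
theorem mul_sub_mul_div_one_sub_lt (ha : 0 < a) (hτ0 : 0 ≤ τ) (hτ1 : τ < 1)
    (hfoc : (τ = 0 ∧ a ≤ b) ∨ a * (1 - τ) ^ 2 = b) (hx0 : 0 ≤ x) (hx1 : x < 1) (hxτ : x ≠ τ) :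
    a * x - b * (x / (1 - x)) < a * τ - b * (τ / (1 - τ)) := by
  have hnum : (x - τ) * (a * (1 - x) * (1 - τ) - b) < 0 := by
    rcases hfoc with ⟨rfl, hab⟩ | rfl
    · have hx : 0 < x := lt_of_le_of_ne hx0 (Ne.symm hxτ)
      nlinarith [mul_pos ha (mul_pos hx hx)]
    · have : 0 < (x - τ) ^ 2 := pow_two_pos_of_ne_zero (sub_ne_zero.mpr hxτ)
      nlinarith [mul_pos (mul_pos ha (sub_pos.mpr hτ1)) this]
  rw [← sub_neg, mul_sub_mul_div_one_sub_sub hx1.ne hτ1.ne]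
  exact div_neg_of_neg_of_pos hnum (mul_pos (sub_pos.mpr hx1) (sub_pos.mpr hτ1))

end NetBenefit

section Precision

variable {σ2 s t c u τ : ℝ}

theorem max_zero_div_mem_Ico_s11 (hσ : 0 < σ2) (hs : 0 < s) (ht : 0 < t) :
    max 0 ((σ2 - s) / (σ2 + t)) ∈ Set.Ico 0 1 :=
  ⟨le_max_left _ _, max_lt one_pos ((div_lt_one (by positivity)).mpr (by linarith))⟩

theorem foc_of_eq_max_zero_div (hσ : 0 < σ2) (ht : 0 < t) (hut : u * t = c * s)
    (hτ : τ = max 0 ((σ2 - s) / (σ2 + t))) :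
    (τ = 0 ∧ σ2 ≤ s) ∨ u * σ2 * (1 - τ) = s * (c * τ + u) := by
  have hσt : 0 < σ2 + t := by positivity
  by_cases hσs : σ2 ≤ s
  · exact .inl ⟨hτ ▸ max_eq_left (div_nonpos_of_nonpos_of_nonneg (by linarith) hσt.le), hσs⟩
  · right
    rw [hτ, max_eq_right (div_pos (by linarith) hσt).le]
    field_simp
    linear_combination (σ2 - s) * hut

variable {α m I : ℝ}

/-- The left-hand side is `(1 - τ) ^ 2` times the derivative at `τ` of the net benefit. -/
theorem one_sub_sq_mul_deriv_net_benefit (hu : u ≠ 0) (hσ : σ2 ≠ 0) (hI : I ≠ 0)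
    (hτ : c * τ + u ≠ 0) (hs : α ^ 2 * s ^ 2 * I = 2 * m * u) :
    u / 2 * α ^ 2 * σ2 / (c * τ + u) ^ 2 * (1 - τ) ^ 2 - m / (I * σ2) =
      α ^ 2 / (2 * u * σ2 * (c * τ + u) ^ 2) *
        ((u * σ2 * (1 - τ)) ^ 2 - (s * (c * τ + u)) ^ 2) := by
  field_simp
  linear_combination (c * τ + u) ^ 2 * hs

theorem net_benefit_foc (hα : α ≠ 0) (hu : 0 < u) (hσ : 0 < σ2) (hI : I ≠ 0)
    (hτ : 0 < c * τ + u) (hs : α ^ 2 * s ^ 2 * I = 2 * m * u)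
    (hfoc : (τ = 0 ∧ σ2 ≤ s) ∨ u * σ2 * (1 - τ) = s * (c * τ + u)) :
    (τ = 0 ∧ u / 2 * α ^ 2 * σ2 / (c * τ + u) ^ 2 ≤ m / (I * σ2)) ∨
      u / 2 * α ^ 2 * σ2 / (c * τ + u) ^ 2 * (1 - τ) ^ 2 = m / (I * σ2) := by
  have hk : 0 < α ^ 2 / (2 * u * σ2 * (c * τ + u) ^ 2) := by positivity
  have key := one_sub_sq_mul_deriv_net_benefit hu.ne' hσ.ne' hI hτ.ne' hs
  rcases hfoc with ⟨rfl, hσs⟩ | heq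
  · have hsq : (u * σ2 * (1 - 0)) ^ 2 ≤ (s * (c * 0 + u)) ^ 2 := by
      simp only [sub_zero, mul_one, mul_zero, zero_add]
      exact pow_le_pow_left₀ (by positivity) (by nlinarith) 2
    have := key ▸ mul_nonpos_of_nonneg_of_nonpos hk.le (sub_nonpos.mpr hsq)
    simp only [sub_zero, one_pow, mul_one] at this
    exact .inl ⟨rfl, sub_nonpos.mp this⟩
  · exact .inr (sub_eq_zero.mp (by rw [key, heq, sub_self, mul_zero]))

end Precision

/-- Proposition 4 (decentralized scheme): the equilibrium optimal prediction precision
`τ*` is the unique maximizer of the expected net benefit over `[0,1)`. -/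
theorem stmt_11 (α u m σ2 : ℝ) (hα : 0 < α) (hu : 0 < u) (hm : 0 < m) (hσ2 : 0 < σ2)
    (I : ℕ) (hI : 0 < I)
    (γ : ℝ) (hγ : γ = (I : ℝ) * α)
    (τstar : ℝ)
    (hτ : τstar = max 0 ((σ2 - Real.sqrt (2 * m * u / (I : ℝ)) / α) /
        (σ2 + Real.sqrt (2 * m * (I : ℝ) / u))))
    (g : ℝ → ℝ)
    (hg : g = fun x => (u / 2) * α ^ 2 * σ2 * x / (γ * τstar + u) ^ 2 -
        (m / ((I : ℝ) * σ2)) * (x / (1 - x))) :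
    τstar ∈ Set.Ico (0 : ℝ) 1 ∧
      ∀ x ∈ Set.Ico (0 : ℝ) 1, x ≠ τstar → g x < g τstar := by
  have hIpos : (0 : ℝ) < I := Nat.cast_pos.mpr hI
  set s := √(2 * m * u / I) / α with hs
  set t := √(2 * m * I / u) with ht
  have hs0 : 0 < s := by positivity
  have ht0 : 0 < t := by positivity
  have hs2 : α ^ 2 * s ^ 2 * I = 2 * m * u := by
    rw [hs, div_pow, sq_sqrt (by positivity)]
    field_simp
  have hut : u * t = γ * s := by
    refine (sq_eq_sq₀ (by positivity) (by rw [hγ]; positivity)).mp ?_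
    have hu2 : u ^ 2 * (2 * m * I / u) = 2 * m * I * u := by field_simp
    rw [mul_pow, ht, sq_sqrt (by positivity), hu2, hγ]
    linear_combination (-I : ℝ) * hs2
  have hτmem : τstar ∈ Set.Ico 0 1 := hτ ▸ max_zero_div_mem_Ico_s11 hσ2 hs0 ht0
  have hden : 0 < γ * τstar + u := by
    have : 0 ≤ γ := by rw [hγ]; positivity
    nlinarith [hτmem.1]
  have hfoc := net_benefit_foc hα.ne' hu hσ2 hIpos.ne' hden hs2
    (foc_of_eq_max_zero_div hσ2 ht0 hut hτ)
  refine ⟨hτmem, fun x hx hxτ => ?_⟩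
  have := mul_sub_mul_div_one_sub_lt (by positivity) hτmem.1 hτmem.2 hfoc hx.1 hx.2 hxτ
  simp only [hg]
  convert this using 2 <;> ring
end

section
/- Fix reals α > 0, u > 0 and positive integers I and L satisfying (L−2)·I·α < u, and set γ := I·α. Let H be the L×L real matrix with zero diagonal and every off-diagonal entry equal to −γ/(γ+u). Then for every h ∈ ℝ^L there is a unique x* ∈ ℝ^L with x* = H·x* + h, and for every initial point x⁰ ∈ ℝ^L the sequence defined by x^{k+1} := H·x^k + h converges to x*. -/
/-!
Measured in the sup norm on `ℝ^L`, the operator norm of a matrix is its largest absolute row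
sum. Every row of `H` sums in absolute value to `(L - 1) γ / (γ + u)`, and condition C1 is
exactly `(L - 1) γ < γ + u`, so `x ↦ H x + h` is a contraction of the complete space `ℝ^L`
and Banach's fixed point theorem applies.
-/

open Filter Topology NNReal

attribute [local instance] Matrix.linftyOpSeminormedAddCommGroup

theorem ContractingWith.exists_fixedPoint_tendsto_iterate {X : Type*} [MetricSpace X]
    [Nonempty X] [CompleteSpace X] {K : ℝ≥0} {f : X → X} (hf : ContractingWith K f) :
    ∃ x : X, (∀ y, y = f y ↔ y = x) ∧ ∀ x₀, Tendsto (fun k => f^[k] x₀) atTop (𝓝 x) := by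
  refine ⟨fixedPoint f hf, fun y => ⟨fun hy => hf.fixedPoint_unique hy.symm, ?_⟩,
    hf.tendsto_iterate_fixedPoint⟩
  rintro rfl
  exact (hf.fixedPoint_isFixedPt).symm

namespace Matrix

variable {ι : Type*} [Fintype ι]

theorem sum_norm_row_of_offDiag_const {E : Type*} [SeminormedAddCommGroup E] [DecidableEq ι]
    {A : Matrix ι ι E} {c : E} (hA : ∀ i j, A i j = if i = j then 0 else c) (i : ι) :
    ∑ j, ‖A i j‖ = ((Fintype.card ι : ℝ) - 1) * ‖c‖ := by
  have hrow : ∀ j, ‖A i j‖ = ‖c‖ - if i = j then ‖c‖ else 0 := by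
    intro j
    by_cases hij : i = j <;> simp [hA, hij]
  simp only [hrow, Finset.sum_sub_distrib, Finset.sum_ite_eq, Finset.mem_univ, if_true,
    Finset.sum_const, Finset.card_univ, nsmul_eq_mul]
  ring

theorem linfty_opNNNorm_lt_one {κ : Type*} [Fintype κ] {E : Type*} [SeminormedAddCommGroup E]
    {A : Matrix ι κ E} (hA : ∀ i, ∑ j, ‖A i j‖ < 1) : ‖A‖₊ < 1 := by
  rw [linfty_opNNNorm_def, Finset.sup_lt_iff zero_lt_one]
  intro i _
  rw [← NNReal.coe_lt_coe, NNReal.coe_sum]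
  exact hA i

theorem contractingWith_mulVec_add {R : Type*} [NormedRing R] {A : Matrix ι ι R}
    (hA : ‖A‖₊ < 1) (h : ι → R) : ContractingWith ‖A‖₊ (fun x => A *ᵥ x + h) := by
  refine ⟨hA, LipschitzWith.of_dist_le_mul fun x y => ?_⟩
  rw [dist_eq_norm, dist_eq_norm, add_sub_add_right_eq_sub, ← mulVec_sub]
  exact linfty_opNorm_mulVec A (x - y)

end Matrix

theorem stmt_14_general (α u : ℝ) (hα : 0 < α)
    (I L : ℕ)
    (hC1 : ((L : ℝ) - 2) * I * α < u)
    (γ : ℝ) (hγ : γ = (I : ℝ) * α)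
    (H : Matrix (Fin L) (Fin L) ℝ)
    (hH : ∀ i j, H i j = if i = j then 0 else -(γ / (γ + u))) :
    ∀ h : Fin L → ℝ,
      ∃ xstar : Fin L → ℝ,
        (∀ y : Fin L → ℝ, y = H.mulVec y + h ↔ y = xstar) ∧
        ∀ x0 : Fin L → ℝ,
          Filter.Tendsto (fun k => (fun x => H.mulVec x + h)^[k] x0)
            Filter.atTop (nhds xstar) := by
  intro h
  have hγ₀ : 0 ≤ γ := hγ ▸ by positivity
  have hC1' : ((L : ℝ) - 1) * γ < γ + u := by rw [hγ]; linarith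
  have hrow : ∀ i, ∑ j, ‖H i j‖ < 1 := by
    intro i
    have hL : (1 : ℝ) ≤ L := by exact_mod_cast Fin.pos i
    have hγu : 0 < γ + u := by nlinarith
    rw [Matrix.sum_norm_row_of_offDiag_const hH, Fintype.card_fin, norm_neg,
      Real.norm_of_nonneg (by positivity), mul_div_assoc', div_lt_one hγu]
    exact hC1'
  exact (Matrix.contractingWith_mulVec_add (Matrix.linfty_opNNNorm_lt_one hrow) h)
    |>.exists_fixedPoint_tendsto_iterate

/-- Proposition 5 (convergence of the DPP algorithm): under Condition C1,
`(L−2)·I·α < u`, the affine iteration `x ↦ H·x + h` has a unique fixed point `x*` and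
converges to `x*` from every initial point. -/
theorem stmt_14 (α u : ℝ) (hα : 0 < α) (hu : 0 < u)
    (I L : ℕ) (hI : 0 < I) (hL : 0 < L)
    (hC1 : ((L : ℝ) - 2) * I * α < u)
    (γ : ℝ) (hγ : γ = (I : ℝ) * α)
    (H : Matrix (Fin L) (Fin L) ℝ)
    (hH : ∀ i j, H i j = if i = j then 0 else -(γ / (γ + u))) :
    ∀ h : Fin L → ℝ,
      ∃ xstar : Fin L → ℝ,
        (∀ y : Fin L → ℝ, y = H.mulVec y + h ↔ y = xstar) ∧
        ∀ x0 : Fin L → ℝ,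
          Filter.Tendsto (fun k => (fun x => H.mulVec x + h)^[k] x0)
            Filter.atTop (nhds xstar) :=
  stmt_14_general α u hα I L hC1 γ hγ H hH
end

section
/- Fix reals α > 0, u > 0, t, β₀ and positive integers I, L, and set γ := I·α, ζ := I·L·α. Let w̄_l, w_l ∈ ℝ and τ_l ∈ [0,1] for l = 1,…,L. Define, for each l, D̂_l := (t − β₀ + α·Σ_{j=1}^L w̄_j)/(ζ + u) + (α·(τ_l − 1)/(γ·τ_l + u))·(w_l − w̄_l) + ((γ + u)/(ζ + u))·Σ_{j=1}^L (α/(γ·τ_j + u))·(w_j − w̄_j), and F_l := I·D̂_l − w_l. Then for every l, F_l = (t − β_l + α·w̄_l)/(α + u/I) + (α·τ_l/(α·τ_l + u/I))·(w_l − w̄_l) − w_l, where β_l := β₀ + α·Σ_{j≠l} F_j. -/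
/-!
Write `D̂_l = c + e_l (w_l − w̄_l)` with `e_l = α(τ_l − 1)/(γτ_l + u)` and `c` the part common to all
subregions. Substituting `β_l = β₀ + α(Σ_j F_j − F_l)` and `F_l = I D̂_l − w_l`, the best-response
equation of subregion `l` becomes the balance `u D̂_l + α Σ_j F_j = t − β₀ + u e_l (w_l − w̄_l)`,
i.e. `u c + α Σ_j F_j = t − β₀`. Since `I e_j = 1 − (γ + u)/(γτ_j + u)`, the sum `α Σ_j F_j` equals
`ζ c − α Σ_j w̄_j − (γ + u) Σ_j α (w_j − w̄_j)/(γτ_j + u)`, and the two constant terms of `c` in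
(21) are chosen exactly so that this balance holds.
-/

open Finset

/-- Equation (21), with `γ = Iα` and `ζ = I · |ι| · α` written out. -/
noncomputable def limitDemand {ι : Type*} [Fintype ι] (α u t β₀ I : ℝ) (wbar w τ : ι → ℝ)
    (l : ι) : ℝ :=
  (t - β₀ + α * ∑ j, wbar j) / (I * Fintype.card ι * α + u) +
    (α * (τ l - 1) / (I * α * τ l + u)) * (w l - wbar l) +
    ((I * α + u) / (I * Fintype.card ι * α + u)) *
      ∑ j, (α / (I * α * τ j + u)) * (w j - wbar j)

lemma best_response_of_balance {α u t β₀ I τ D w wbar Fsum : ℝ} (hα : 0 ≤ α) (hu : 0 < u)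
    (hI : 0 < I) (hτ : 0 ≤ τ)
    (h : u * D + α * Fsum = t - β₀ + u * (α * (τ - 1) / (I * α * τ + u)) * (w - wbar)) :
    I * D - w = (t - (β₀ + α * (Fsum - (I * D - w))) + α * wbar) / (α + u / I) +
      (α * τ / (α * τ + u / I)) * (w - wbar) - w := by
  have hdτ : I * α * τ + u ≠ 0 := by positivity
  have hd : I * α + u ≠ 0 := by positivity
  rw [show α + u / I = (I * α + u) / I by field_simp,
    show α * τ + u / I = (I * α * τ + u) / I by field_simp]
  field_simp at h ⊢
  linear_combination I * h

lemma mul_excess_demand_eq {α u I τ w wbar : ℝ} (hd : I * α * τ + u ≠ 0) :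
    α * (I * (α * (τ - 1) / (I * α * τ + u)) * (w - wbar) - w) =
      -(α * wbar) - (I * α + u) * ((α / (I * α * τ + u)) * (w - wbar)) := by
  rw [div_eq_mul_inv, div_eq_mul_inv]
  linear_combination α * (w - wbar) * mul_inv_cancel₀ hd

section

variable {ι : Type*} [Fintype ι] {α u I : ℝ} (t β₀ : ℝ) (wbar w τ : ι → ℝ)

lemma limitDemand_balance (hα : 0 ≤ α) (hu : 0 < u) (hI : 0 < I) (hτ : ∀ j, 0 ≤ τ j) (l : ι) :
    u * limitDemand α u t β₀ I wbar w τ l +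
        α * ∑ j, (I * limitDemand α u t β₀ I wbar w τ j - w j) =
      t - β₀ + u * (α * (τ l - 1) / (I * α * τ l + u)) * (w l - wbar l) := by
  set n : ℝ := (Fintype.card ι : ℝ)
  set S := ∑ j, (α / (I * α * τ j + u)) * (w j - wbar j)
  set c := (t - β₀ + α * ∑ j, wbar j) / (I * n * α + u) + ((I * α + u) / (I * n * α + u)) * S
  have hden : 0 < I * n * α + u := by positivity
  have hsum : α * ∑ j, (I * limitDemand α u t β₀ I wbar w τ j - w j) =
      I * n * α * c - α * ∑ j, wbar j - (I * α + u) * S := by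
    have hD : ∀ j, I * limitDemand α u t β₀ I wbar w τ j - w j =
        I * c + (I * (α * (τ j - 1) / (I * α * τ j + u)) * (w j - wbar j) - w j) := by
      intro j
      simp only [limitDemand, c, n, S]
      ring
    rw [sum_congr rfl fun j _ => hD j, mul_sum,
      sum_congr rfl fun j _ => by rw [mul_add, mul_excess_demand_eq (by have := hτ j; positivity)],
      sum_add_distrib, sum_const, card_univ, nsmul_eq_mul, sum_sub_distrib, sum_neg_distrib,
      ← mul_sum, ← mul_sum]
    ring
  rw [hsum]
  simp only [limitDemand, c, n, S]
  field_simp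
  ring

end

theorem stmt_15_general (α u t β₀ : ℝ) (hα : 0 < α) (hu : 0 < u)
    (I L : ℕ) (hI : 0 < I)
    (γ ζ : ℝ) (hγ : γ = (I : ℝ) * α) (hζ : ζ = (I : ℝ) * L * α)
    (wbar w : Fin L → ℝ)
    (τ : Fin L → ℝ) (hτ : ∀ l, τ l ∈ Set.Icc (0 : ℝ) 1)
    (Dhat : Fin L → ℝ)
    (hDhat : ∀ l, Dhat l = (t - β₀ + α * ∑ j, wbar j) / (ζ + u) +
        (α * (τ l - 1) / (γ * τ l + u)) * (w l - wbar l) +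
        ((γ + u) / (ζ + u)) * ∑ j, (α / (γ * τ j + u)) * (w j - wbar j))
    (F : Fin L → ℝ) (hF : ∀ l, F l = (I : ℝ) * Dhat l - w l)
    (β : Fin L → ℝ) (hβ : ∀ l, β l = β₀ + α * ∑ j ∈ Finset.univ.erase l, F j) :
    ∀ l, F l = (t - β l + α * wbar l) / (α + u / (I : ℝ)) +
        (α * τ l / (α * τ l + u / (I : ℝ))) * (w l - wbar l) - w l := by
  have hτ₀ : ∀ l, 0 ≤ τ l := fun l => (hτ l).1
  have hD : Dhat = limitDemand α u t β₀ I wbar w τ := by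
    funext l
    rw [hDhat l, limitDemand, hγ, hζ, Fintype.card_fin]
  have hFD : F = fun j => (I : ℝ) * Dhat j - w j := funext hF
  intro l
  rw [hβ l, Finset.sum_erase_eq_sub (Finset.mem_univ l), hFD, hD]
  exact best_response_of_balance hα.le hu (by exact_mod_cast hI) (hτ₀ l)
    (limitDemand_balance t β₀ wbar w τ hα.le hu (by exact_mod_cast hI) hτ₀ l)

/-- Proposition 5 (fixed-point identity): the explicit limiting average demand `D̂_l`
of equation (21) solves the DPP fixed-point system
`F_l = (t − β_l + α·w̄_l)/(α + u/I) + (α·τ_l/(α·τ_l + u/I))·(w_l − w̄_l) − w_l`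
with `β_l = β₀ + α·Σ_{j≠l} F_j`. -/
theorem stmt_15 (α u t β₀ : ℝ) (hα : 0 < α) (hu : 0 < u)
    (I L : ℕ) (hI : 0 < I) (hL : 0 < L)
    (γ ζ : ℝ) (hγ : γ = (I : ℝ) * α) (hζ : ζ = (I : ℝ) * L * α)
    (wbar w : Fin L → ℝ)
    (τ : Fin L → ℝ) (hτ : ∀ l, τ l ∈ Set.Icc (0 : ℝ) 1)
    (Dhat : Fin L → ℝ)
    (hDhat : ∀ l, Dhat l = (t - β₀ + α * ∑ j, wbar j) / (ζ + u) +
        (α * (τ l - 1) / (γ * τ l + u)) * (w l - wbar l) +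
        ((γ + u) / (ζ + u)) * ∑ j, (α / (γ * τ j + u)) * (w j - wbar j))
    (F : Fin L → ℝ) (hF : ∀ l, F l = (I : ℝ) * Dhat l - w l)
    (β : Fin L → ℝ) (hβ : ∀ l, β l = β₀ + α * ∑ j ∈ Finset.univ.erase l, F j) :
    ∀ l, F l = (t - β l + α * wbar l) / (α + u / (I : ℝ)) +
        (α * τ l / (α * τ l + u / (I : ℝ))) * (w l - wbar l) - w l :=
  stmt_15_general α u t β₀ hα hu I L hI γ ζ hγ hζ wbar w τ hτ Dhat hDhat F hF β hβ
end

section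
/- Fix reals α > 0, u > 0, m > 0 and positive integers I, L, and set γ := I·α, ζ := I·L·α. For s > 0 define τ^{cen}(s) := max(0, (s − √(2mu/(IL))/α)/(s + √(2mIL/u))) and τ^{dis}(s) := max(0, (s − √(2mu/I)/α)/(s + √(2mI/u))). Then the functions f(s) := ( ((γ+u)/(ζ+u))·α/(γ·τ^{dis}(s) + u) − α·τ^{cen}(s)/(ζ·τ^{cen}(s) + u) )²·s and g(s) := ( ((γ−ζ)/(ζ+u))·α/(γ·τ^{dis}(s) + u) + α·τ^{dis}(s)/(γ·τ^{dis}(s) + u) − α·τ^{cen}(s)/(ζ·τ^{cen}(s) + u) )²·s are both bounded on (0, ∞). -/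
/-!
Write `τ = max 0 ((s - A) / (s + B))` for either precision. Then `0 ≤ 1 - τ ≤ 1` and
`s (1 - τ) ≤ A + B`, hence `(1 - τ)² s ≤ A + B` for all `s > 0`. Both bracketed expressions are
combinations of `α / (c τ + u)` and `α τ / (c τ + u)` that vanish at `τ = 1`, and these rational
functions are Lipschitz in `τ ∈ [0, 1]`; so each bracket is `O(1 - τcen) + O(1 - τdis)`, and its
square times `s` is bounded.
-/

noncomputable def clippedPrecision (A B s : ℝ) : ℝ := max 0 ((s - A) / (s + B))

section clippedPrecision

variable {A B s : ℝ}

lemma clippedPrecision_nonneg : 0 ≤ clippedPrecision A B s := le_max_left _ _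

lemma clippedPrecision_le_one (hA : 0 ≤ A) (hB : 0 ≤ B) (hs : 0 < s) :
    clippedPrecision A B s ≤ 1 :=
  max_le zero_le_one <| (div_le_one (by linarith)).2 (by linarith)

lemma mul_one_sub_clippedPrecision_le (hA : 0 ≤ A) (hB : 0 ≤ B) (hs : 0 < s) :
    s * (1 - clippedPrecision A B s) ≤ A + B := by
  rcases le_total A s with hAs | hsA
  · have hsB : 0 < s + B := by linarith
    have hτ : clippedPrecision A B s = (s - A) / (s + B) :=
      max_eq_right (div_nonneg (by linarith) hsB.le)
    have h1τ : 1 - clippedPrecision A B s = (A + B) / (s + B) := by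
      rw [hτ]; field_simp; ring
    rw [h1τ, mul_div_assoc']
    exact (div_le_iff₀ hsB).2 (by nlinarith)
  · have hτ : clippedPrecision A B s = 0 :=
      max_eq_left (div_nonpos_of_nonpos_of_nonneg (by linarith) (by linarith))
    rw [hτ]
    linarith

end clippedPrecision

section Lipschitz

variable {c u t : ℝ}

lemma abs_mul_one_sub_div_le (p : ℝ) (hc : 0 ≤ c) (hu : 0 < u) (ht₀ : 0 ≤ t) (ht₁ : t ≤ 1) :
    |p * (1 - t) / ((c * t + u) * (c + u))| ≤ |p| / u ^ 2 * (1 - t) := by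
  have hden : u ^ 2 ≤ (c * t + u) * (c + u) := by
    rw [sq]; exact mul_le_mul (by nlinarith) (by linarith) hu.le (by positivity)
  have hD : 0 < (c * t + u) * (c + u) := by positivity
  rw [abs_div, abs_of_pos hD, abs_mul, abs_of_nonneg (sub_nonneg.2 ht₁),
    div_mul_eq_mul_div]
  exact div_le_div_of_nonneg_left (by have := sub_nonneg.2 ht₁; positivity) (by positivity) hden

lemma abs_div_mul_add_sub_div_add_le (α : ℝ) (hc : 0 ≤ c) (hu : 0 < u) (ht₀ : 0 ≤ t)
    (ht₁ : t ≤ 1) : |α / (c * t + u) - α / (c + u)| ≤ |α * c| / u ^ 2 * (1 - t) := by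
  have hct : 0 < c * t + u := by positivity
  have hcu : 0 < c + u := by positivity
  have key : α / (c * t + u) - α / (c + u) = α * c * (1 - t) / ((c * t + u) * (c + u)) := by
    field_simp; ring
  rw [key]
  exact abs_mul_one_sub_div_le _ hc hu ht₀ ht₁

lemma abs_mul_div_mul_add_sub_div_add_le (α : ℝ) (hc : 0 ≤ c) (hu : 0 < u) (ht₀ : 0 ≤ t)
    (ht₁ : t ≤ 1) : |α * t / (c * t + u) - α / (c + u)| ≤ |α * u| / u ^ 2 * (1 - t) := by
  have hct : 0 < c * t + u := by positivity
  have hcu : 0 < c + u := by positivity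
  have key : α * t / (c * t + u) - α / (c + u) = -(α * u) * (1 - t) / ((c * t + u) * (c + u)) := by
    field_simp; ring
  rw [key, ← abs_neg (α * u)]
  exact abs_mul_one_sub_div_le _ hc hu ht₀ ht₁

end Lipschitz

lemma sq_mul_le_of_abs_le {x s a b δ₁ δ₂ C₁ C₂ : ℝ} (hs : 0 < s)
    (hδ₁ : 0 ≤ δ₁) (hδ₁' : δ₁ ≤ 1) (hsδ₁ : s * δ₁ ≤ C₁)
    (hδ₂ : 0 ≤ δ₂) (hδ₂' : δ₂ ≤ 1) (hsδ₂ : s * δ₂ ≤ C₂)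
    (hx : |x| ≤ a * δ₁ + b * δ₂) : x ^ 2 * s ≤ 2 * (a ^ 2 * C₁ + b ^ 2 * C₂) := by
  have hsq₁ : δ₁ ^ 2 * s ≤ C₁ := calc
    δ₁ ^ 2 * s = δ₁ * (s * δ₁) := by ring
    _ ≤ s * δ₁ := mul_le_of_le_one_left (by positivity) hδ₁'
    _ ≤ C₁ := hsδ₁
  have hsq₂ : δ₂ ^ 2 * s ≤ C₂ := calc
    δ₂ ^ 2 * s = δ₂ * (s * δ₂) := by ring
    _ ≤ s * δ₂ := mul_le_of_le_one_left (by positivity) hδ₂'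
    _ ≤ C₂ := hsδ₂
  have hx2 : x ^ 2 ≤ 2 * (a ^ 2 * δ₁ ^ 2 + b ^ 2 * δ₂ ^ 2) := by
    rw [← sq_abs]
    nlinarith [abs_nonneg x, sq_nonneg (a * δ₁ - b * δ₂)]
  nlinarith [mul_le_mul_of_nonneg_left hsq₁ (sq_nonneg a),
    mul_le_mul_of_nonneg_left hsq₂ (sq_nonneg b)]

section Brackets

variable {α γ ζ u tc td : ℝ}

lemma abs_fBracket_le (hγ : 0 ≤ γ) (hζ : 0 ≤ ζ) (hu : 0 < u)
    (htc₀ : 0 ≤ tc) (htc₁ : tc ≤ 1) (htd₀ : 0 ≤ td) (htd₁ : td ≤ 1) :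
    |(γ + u) / (ζ + u) * (α / (γ * td + u)) - α * tc / (ζ * tc + u)| ≤
      |(γ + u) / (ζ + u)| * (|α * γ| / u ^ 2) * (1 - td) + |α * u| / u ^ 2 * (1 - tc) := by
  have hcancel : (γ + u) / (ζ + u) * (α / (γ + u)) = α / (ζ + u) := by
    field_simp
  calc _ = |(γ + u) / (ζ + u) * (α / (γ * td + u) - α / (γ + u)) -
          (α * tc / (ζ * tc + u) - α / (ζ + u))| := by
        congr 1; rw [mul_sub, hcancel]; ring
    _ ≤ |(γ + u) / (ζ + u)| * |α / (γ * td + u) - α / (γ + u)| +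
          |α * tc / (ζ * tc + u) - α / (ζ + u)| := by
        rw [← abs_mul]; exact abs_sub _ _
    _ ≤ _ := by
        rw [mul_assoc]
        gcongr
        · exact abs_div_mul_add_sub_div_add_le α hγ hu htd₀ htd₁
        · exact abs_mul_div_mul_add_sub_div_add_le α hζ hu htc₀ htc₁

lemma abs_gBracket_le (hγ : 0 ≤ γ) (hζ : 0 ≤ ζ) (hu : 0 < u)
    (htc₀ : 0 ≤ tc) (htc₁ : tc ≤ 1) (htd₀ : 0 ≤ td) (htd₁ : td ≤ 1) :
    |(γ - ζ) / (ζ + u) * (α / (γ * td + u)) + α * td / (γ * td + u) -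
        α * tc / (ζ * tc + u)| ≤
      (|(γ - ζ) / (ζ + u)| * (|α * γ| / u ^ 2) + |α * u| / u ^ 2) * (1 - td) +
        |α * u| / u ^ 2 * (1 - tc) := by
  have hcancel : (γ - ζ) / (ζ + u) * (α / (γ + u)) + α / (γ + u) = α / (ζ + u) := by
    field_simp; ring
  calc _ = |(γ - ζ) / (ζ + u) * (α / (γ * td + u) - α / (γ + u)) +
          (α * td / (γ * td + u) - α / (γ + u)) - (α * tc / (ζ * tc + u) - α / (ζ + u))| := by
        congr 1; rw [mul_sub, ← hcancel]; ring
    _ ≤ |(γ - ζ) / (ζ + u)| * |α / (γ * td + u) - α / (γ + u)| +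
          |α * td / (γ * td + u) - α / (γ + u)| + |α * tc / (ζ * tc + u) - α / (ζ + u)| := by
        rw [← abs_mul]; exact (abs_sub _ _).trans (add_le_add_left (abs_add_le _ _) _)
    _ ≤ _ := by
        rw [add_mul, mul_assoc]
        gcongr
        · exact abs_div_mul_add_sub_div_add_le α hγ hu htd₀ htd₁
        · exact abs_mul_div_mul_add_sub_div_add_le α hγ hu htd₀ htd₁
        · exact abs_mul_div_mul_add_sub_div_add_le α hζ hu htc₀ htc₁

end Brackets

theorem stmt_18_general (α u m : ℝ) (hα : 0 < α) (hu : 0 < u)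
    (I L : ℕ)
    (γ ζ : ℝ) (hγ : γ = (I : ℝ) * α) (hζ : ζ = (I : ℝ) * L * α)
    (τcen τdis : ℝ → ℝ)
    (hτcen : ∀ s, τcen s = max 0 ((s - Real.sqrt (2 * m * u / ((I : ℝ) * L)) / α) /
        (s + Real.sqrt (2 * m * (I : ℝ) * L / u))))
    (hτdis : ∀ s, τdis s = max 0 ((s - Real.sqrt (2 * m * u / (I : ℝ)) / α) /
        (s + Real.sqrt (2 * m * (I : ℝ) / u))))
    (f g : ℝ → ℝ)
    (hf : ∀ s, f s = (((γ + u) / (ζ + u)) * (α / (γ * τdis s + u)) -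
        α * τcen s / (ζ * τcen s + u)) ^ 2 * s)
    (hg : ∀ s, g s = (((γ - ζ) / (ζ + u)) * (α / (γ * τdis s + u)) +
        α * τdis s / (γ * τdis s + u) - α * τcen s / (ζ * τcen s + u)) ^ 2 * s) :
    ∃ C : ℝ, ∀ s : ℝ, 0 < s → |f s| ≤ C ∧ |g s| ≤ C := by
  obtain ⟨A₁, B₁, hA₁, hB₁, hτc⟩ : ∃ A B : ℝ, 0 ≤ A ∧ 0 ≤ B ∧
      ∀ s, τcen s = clippedPrecision A B s := ⟨_, _, by positivity, by positivity, hτcen⟩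
  obtain ⟨A₂, B₂, hA₂, hB₂, hτd⟩ : ∃ A B : ℝ, 0 ≤ A ∧ 0 ≤ B ∧
      ∀ s, τdis s = clippedPrecision A B s := ⟨_, _, by positivity, by positivity, hτdis⟩
  have hγ₀ : 0 ≤ γ := by rw [hγ]; positivity
  have hζ₀ : 0 ≤ ζ := by rw [hζ]; positivity
  set a := |α * γ| / u ^ 2
  set b := |α * u| / u ^ 2
  refine ⟨max (2 * ((|(γ + u) / (ζ + u)| * a) ^ 2 * (A₂ + B₂) + b ^ 2 * (A₁ + B₁)))
    (2 * ((|(γ - ζ) / (ζ + u)| * a + b) ^ 2 * (A₂ + B₂) + b ^ 2 * (A₁ + B₁))), fun s hs => ?_⟩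
  have htc₀ : 0 ≤ τcen s := (hτc s).trans_ge clippedPrecision_nonneg
  have htc₁ : τcen s ≤ 1 := (hτc s).trans_le (clippedPrecision_le_one hA₁ hB₁ hs)
  have hstc : s * (1 - τcen s) ≤ A₁ + B₁ := hτc s ▸ mul_one_sub_clippedPrecision_le hA₁ hB₁ hs
  have htd₀ : 0 ≤ τdis s := (hτd s).trans_ge clippedPrecision_nonneg
  have htd₁ : τdis s ≤ 1 := (hτd s).trans_le (clippedPrecision_le_one hA₂ hB₂ hs)
  have hstd : s * (1 - τdis s) ≤ A₂ + B₂ := hτd s ▸ mul_one_sub_clippedPrecision_le hA₂ hB₂ hs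
  rw [hf s, hg s]
  refine ⟨le_max_of_le_left ?_, le_max_of_le_right ?_⟩ <;> rw [abs_of_nonneg (by positivity)]
  · exact sq_mul_le_of_abs_le hs (by linarith) (by linarith) hstd (by linarith) (by linarith) hstc
      (abs_fBracket_le hγ₀ hζ₀ hu htc₀ htc₁ htd₀ htd₁)
  · exact sq_mul_le_of_abs_le hs (by linarith) (by linarith) hstd (by linarith) (by linarith) hstc
      (abs_gBracket_le hγ₀ hζ₀ hu htc₀ htc₁ htd₀ htd₁)

/-- Second claim of Theorem 2: the two variance contribution functions `f` and `g`
(as functions of the renewable output variance `s`) are bounded on `(0, ∞)`. -/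
theorem stmt_18 (α u m : ℝ) (hα : 0 < α) (hu : 0 < u) (hm : 0 < m)
    (I L : ℕ) (hI : 0 < I) (hL : 0 < L)
    (γ ζ : ℝ) (hγ : γ = (I : ℝ) * α) (hζ : ζ = (I : ℝ) * L * α)
    (τcen τdis : ℝ → ℝ)
    (hτcen : ∀ s, τcen s = max 0 ((s - Real.sqrt (2 * m * u / ((I : ℝ) * L)) / α) /
        (s + Real.sqrt (2 * m * (I : ℝ) * L / u))))
    (hτdis : ∀ s, τdis s = max 0 ((s - Real.sqrt (2 * m * u / (I : ℝ)) / α) /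
        (s + Real.sqrt (2 * m * (I : ℝ) / u))))
    (f g : ℝ → ℝ)
    (hf : ∀ s, f s = (((γ + u) / (ζ + u)) * (α / (γ * τdis s + u)) -
        α * τcen s / (ζ * τcen s + u)) ^ 2 * s)
    (hg : ∀ s, g s = (((γ - ζ) / (ζ + u)) * (α / (γ * τdis s + u)) +
        α * τdis s / (γ * τdis s + u) - α * τcen s / (ζ * τcen s + u)) ^ 2 * s) :
    ∃ C : ℝ, ∀ s : ℝ, 0 < s → |f s| ≤ C ∧ |g s| ≤ C :=
  stmt_18_general α u m hα hu I L γ ζ hγ hζ τcen τdis hτcen hτdis f g hf hg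
end
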